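/- Let T = 4I be four times the 2×2 identity matrix and D = { (0,0)ᵀ, (1,1)ᵀ, (2,2)ᵀ, (3,3)ᵀ, (2,1)ᵀ, (1,2)ᵀ, (0,3)ᵀ, (3,0)ᵀ } ⊂ ℤ². Then the attractor F(T,D) is connected. -/

import Mathlib

/-!
Hata's criterion: a compact attractor `F = ⋃ᵢ fᵢ(F)` of contractions is connected as soon as the
graph on the maps, joining `i` and `j` when `fᵢ(F)` meets `fⱼ(F)`, is connected. Indeed, if any two
points of `F` are joined by a chain of step `ε` in `F`, then applying `fᵢ` gives chains of step
`Kε` inside each piece, and the overlaps glue them into chains of step `Kε` through all of `F`;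
so `F` is `ε`-chain connected for every `ε > 0`, which for a compact set means connected.
For the digits at hand, the pieces `T⁻¹(F + d)` meet at images of the fixed points `d / 3` of
other pieces, which lie in `F`.
-/

def castVec {k : ℕ} (d : Fin k → ℤ) : Fin k → ℝ := fun i => (d i : ℝ)

open Set Function Relation Metric Filter Topology
open scoped NNReal

section Chains

variable {X : Type*} [PseudoMetricSpace X]

def EpsChain (S : Set X) (ε : ℝ) : X → X → Prop :=
  ReflTransGen fun x y => x ∈ S ∧ y ∈ S ∧ dist x y ≤ ε

namespace EpsChain

variable {S : Set X} {ε ε' : ℝ} {x y z : X}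

lemma single (hx : x ∈ S) (hy : y ∈ S) (h : dist x y ≤ ε) : EpsChain S ε x y :=
  ReflTransGen.single ⟨hx, hy, h⟩

lemma trans (hxy : EpsChain S ε x y) (hyz : EpsChain S ε y z) : EpsChain S ε x z :=
  ReflTransGen.trans hxy hyz

lemma mono (hε : ε ≤ ε') (h : EpsChain S ε x y) : EpsChain S ε' x y :=
  ReflTransGen.mono (fun _ _ ⟨ha, hb, hab⟩ => ⟨ha, hb, hab.trans hε⟩) _ _ h

lemma image {g : X → X} {K : ℝ≥0} (hg : LipschitzWith K g) (hS : MapsTo g S S)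
    (h : EpsChain S ε x y) : EpsChain S (K * ε) (g x) (g y) :=
  ReflTransGen.lift g (fun a b ⟨ha, hb, hab⟩ =>
    ⟨hS ha, hS hb, (hg.dist_le_mul a b).trans (mul_le_mul_of_nonneg_left hab K.coe_nonneg)⟩) _ _ h

end EpsChain

end Chains

theorem IsCompact.isPreconnected_of_epsChain {X : Type*} [MetricSpace X] {S : Set X}
    (hS : IsCompact S) (h : ∀ ε > 0, ∀ x ∈ S, ∀ y ∈ S, EpsChain S ε x y) : IsPreconnected S := by
  rw [isPreconnected_iff_subset_of_fully_disjoint_closed hS.isClosed]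
  intro u v hu hv hSuv huv
  by_contra! hsplit
  obtain ⟨x, hxS, hxv⟩ := not_subset.1 hsplit.2
  obtain ⟨y, hyS, hyu⟩ := not_subset.1 hsplit.1
  obtain ⟨δ, hδ, hsep⟩ :=
    (huv.mono_left inter_subset_right).exists_thickenings (hS.inter_right hu) hv
  have stays_in_u : ∀ z, EpsChain S (δ / 2) x z → z ∈ u := by
    intro z hz
    induction hz with
    | refl => exact (hSuv hxS).resolve_right hxv
    | tail _ hstep ih =>
      obtain ⟨hp, hq, hpq⟩ := hstep
      refine (hSuv hq).resolve_right fun hqv => disjoint_left.1 hsep ?_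
        (self_subset_thickening hδ v hqv)
      exact mem_thickening_iff.2 ⟨_, ⟨hp, ih⟩, by rw [dist_comm]; linarith⟩
  exact hyu (stays_in_u y (h _ (half_pos hδ) x hxS y hyS))

theorem LipschitzWith.mem_of_isFixedPt {X : Type*} [PseudoMetricSpace X] {g : X → X} {K : ℝ≥0}
    (hg : LipschitzWith K g) (hK : K < 1) {F : Set X} (hF : IsClosed F) (hne : F.Nonempty)
    (hmaps : MapsTo g F F) {p : X} (hp : IsFixedPt g p) : p ∈ F := by
  obtain ⟨x, hx⟩ := hne
  have hdist : ∀ n : ℕ, dist (g^[n] x) p ≤ (K : ℝ) ^ n * dist x p := fun n => by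
    simpa [(hp.iterate n).eq] using (hg.iterate n).dist_le_mul x p
  have hlim : Tendsto (fun n => g^[n] x) atTop (𝓝 p) := by
    rw [tendsto_iff_dist_tendsto_zero]
    refine squeeze_zero (fun _ => dist_nonneg) hdist ?_
    simpa using (tendsto_pow_atTop_nhds_zero_of_lt_one K.coe_nonneg hK).mul_const (dist x p)
  exact hF.mem_of_tendsto hlim (Eventually.of_forall fun n => hmaps.iterate n hx)

section Hata

variable {X ι : Type*} {f : ι → X → X} {s : Set ι} {F : Set X}

def PiecesMeet (f : ι → X → X) (s : Set ι) (F : Set X) (i j : ι) : Prop :=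
  i ∈ s ∧ j ∈ s ∧ (f i '' F ∩ f j '' F).Nonempty

instance : Std.Symm (PiecesMeet f s F) :=
  ⟨fun _ _ ⟨hi, hj, hij⟩ => ⟨hj, hi, inter_comm (f _ '' F) _ ▸ hij⟩⟩

lemma piecesMeet_of_map_eq {i j : ι} (hi : i ∈ s) (hj : j ∈ s) {a b : X} (ha : a ∈ F)
    (hb : b ∈ F) (h : f i a = f j b) : PiecesMeet f s F i j :=
  ⟨hi, hj, f j b, ⟨a, ha, h⟩, b, hb, rfl⟩

variable [MetricSpace X]

lemma epsChain_of_mem_piece (hF : F = ⋃ i ∈ s, f i '' F) {K : ℝ≥0}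
    (hf : ∀ i ∈ s, LipschitzWith K (f i)) {ε : ℝ} (hε : ∀ x ∈ F, ∀ y ∈ F, EpsChain F ε x y) {i : ι}
    (hi : i ∈ s) : ∀ x ∈ f i '' F, ∀ y ∈ f i '' F, EpsChain F (K * ε) x y := by
  rintro _ ⟨a, ha, rfl⟩ _ ⟨b, hb, rfl⟩
  exact (hε a ha b hb).image (hf i hi) fun x hx => hF.superset (mem_biUnion hi ⟨x, hx, rfl⟩)

lemma epsChain_of_reflTransGen_piecesMeet (hF : F = ⋃ i ∈ s, f i '' F) {K : ℝ≥0}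
    (hf : ∀ i ∈ s, LipschitzWith K (f i)) {ε : ℝ} (hε : ∀ x ∈ F, ∀ y ∈ F, EpsChain F ε x y)
    {i j : ι} (hi : i ∈ s) (hij : ReflTransGen (PiecesMeet f s F) i j) :
    ∀ x ∈ f i '' F, ∀ y ∈ f j '' F, EpsChain F (K * ε) x y := by
  intro x hx
  induction hij with
  | refl => exact epsChain_of_mem_piece hF hf hε hi x hx
  | tail _ hkj ih =>
    obtain ⟨-, hj, z, hzk, hzj⟩ := hkj
    exact fun y hy => (ih z hzk).trans (epsChain_of_mem_piece hF hf hε hj z hzj y hy)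

theorem isPreconnected_of_reflTransGen_piecesMeet {K : ℝ≥0} (hK : K < 1)
    (hf : ∀ i ∈ s, LipschitzWith K (f i)) (hF : F = ⋃ i ∈ s, f i '' F) (hcpt : IsCompact F)
    (hconn : ∀ i ∈ s, ∀ j ∈ s, ReflTransGen (PiecesMeet f s F) i j) : IsPreconnected F := by
  obtain ⟨M, hM⟩ := isBounded_iff.1 hcpt.isBounded
  have hscale : ∀ n : ℕ, ∀ x ∈ F, ∀ y ∈ F, EpsChain F ((K : ℝ) ^ n * M) x y := by
    intro n
    induction n with
    | zero => exact fun x hx y hy => .single hx hy (by simpa using hM hx hy)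
    | succ n ih =>
      intro x hx y hy
      rw [hF] at hx hy
      obtain ⟨i, hi, hxi⟩ := mem_iUnion₂.1 hx
      obtain ⟨j, hj, hyj⟩ := mem_iUnion₂.1 hy
      rw [pow_succ', mul_assoc]
      exact epsChain_of_reflTransGen_piecesMeet hF hf ih hi (hconn i hi j hj) x hxi y hyj
  refine hcpt.isPreconnected_of_epsChain fun ε hε x hx y hy => ?_
  have hlim : Tendsto (fun n : ℕ => (K : ℝ) ^ n * M) atTop (𝓝 0) := by
    simpa using (tendsto_pow_atTop_nhds_zero_of_lt_one K.coe_nonneg hK).mul_const M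
  obtain ⟨n, hn⟩ := (hlim.eventually (ge_mem_nhds hε)).exists
  exact (hscale n x hx y hy).mono hn

end Hata

section Digits

def digits : Finset (Fin 2 → ℤ) :=
  {![0, 0], ![1, 1], ![2, 2], ![3, 3], ![2, 1], ![1, 2], ![0, 3], ![3, 0]}

noncomputable def digitMap (d : Fin 2 → ℤ) (x : Fin 2 → ℝ) : Fin 2 → ℝ :=
  (4 : ℝ)⁻¹ • (x + castVec d)

noncomputable def digitFixedPt (d : Fin 2 → ℤ) : Fin 2 → ℝ := (3 : ℝ)⁻¹ • castVec d

lemma lipschitzWith_digitMap (d : Fin 2 → ℤ) : LipschitzWith 4⁻¹ (digitMap d) :=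
  LipschitzWith.of_dist_le_mul fun x y => by
    simp [digitMap, dist_eq_norm, ← smul_sub, norm_smul]

lemma isFixedPt_digitMap (d : Fin 2 → ℤ) : IsFixedPt (digitMap d) (digitFixedPt d) := by
  unfold IsFixedPt digitMap digitFixedPt
  module

lemma castVec_add {k : ℕ} (d e : Fin k → ℤ) : castVec (d + e) = castVec d + castVec e := by
  ext i; simp [castVec]

lemma castVec_smul {k : ℕ} (n : ℤ) (d : Fin k → ℤ) : castVec (n • d) = (n : ℝ) • castVec d := by
  ext i; simp [castVec]

lemma digitMap_digitFixedPt (d e : Fin 2 → ℤ) :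
    digitMap d (digitFixedPt e) = (12 : ℝ)⁻¹ • castVec ((3 : ℤ) • d + e) := by
  rw [castVec_add, castVec_smul, digitMap, digitFixedPt]
  push_cast
  module

variable {F : Set (Fin 2 → ℝ)}

lemma digitFixedPt_mem (hF : IsClosed F) (hne : F.Nonempty)
    (hfix : F = ⋃ d ∈ digits, digitMap d '' F) {d : Fin 2 → ℤ} (hd : d ∈ digits) :
    digitFixedPt d ∈ F :=
  (lipschitzWith_digitMap d).mem_of_isFixedPt (by norm_num) hF hne
    (fun x hx => hfix.superset (mem_biUnion hd ⟨x, hx, rfl⟩)) (isFixedPt_digitMap d)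

lemma reflTransGen_piecesMeet_digits (hF : IsClosed F) (hne : F.Nonempty)
    (hfix : F = ⋃ d ∈ digits, digitMap d '' F) :
    ∀ d ∈ digits, ∀ e ∈ digits, ReflTransGen (PiecesMeet digitMap digits F) d e := by
  have meet : ∀ d e d' e' : Fin 2 → ℤ,
      d ∈ digits ∧ e ∈ digits ∧ d' ∈ digits ∧ e' ∈ digits ∧ (3 : ℤ) • d + e = (3 : ℤ) • d' + e' →
      PiecesMeet digitMap digits F d d' := fun d e d' e' ⟨hd, he, hd', he', h⟩ =>
    piecesMeet_of_map_eq hd hd' (digitFixedPt_mem hF hne hfix he)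
      (digitFixedPt_mem hF hne hfix he')
      (by rw [digitMap_digitFixedPt, digitMap_digitFixedPt, h])
  have to_hub : ∀ d ∈ digits, ReflTransGen (PiecesMeet digitMap digits F) d ![1, 1] := by
    have m22 := meet ![2, 2] ![0, 0] ![1, 1] ![3, 3] (by decide)
    have m21 := meet ![2, 1] ![0, 0] ![1, 1] ![3, 0] (by decide)
    have m12 := meet ![1, 2] ![0, 0] ![1, 1] ![0, 3] (by decide)
    intro d hd
    simp only [digits, Finset.mem_insert, Finset.mem_singleton] at hd
    rcases hd with rfl | rfl | rfl | rfl | rfl | rfl | rfl | rfl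
    · exact .single (meet ![0, 0] ![3, 3] ![1, 1] ![0, 0] (by decide))
    · exact .refl
    · exact .single m22
    · exact .head (meet ![3, 3] ![0, 0] ![2, 2] ![3, 3] (by decide)) (.single m22)
    · exact .single m21
    · exact .single m12
    · exact .head (meet ![0, 3] ![3, 0] ![1, 2] ![0, 3] (by decide)) (.single m12)
    · exact .head (meet ![3, 0] ![0, 3] ![2, 1] ![3, 0] (by decide)) (.single m21)
  exact fun d hd e he =>
    (to_hub d hd).trans (Std.Symm.symm (r := ReflTransGen _) _ _ (to_hub e he))

end Digits

/-- For `T = 4I` (so `T⁻¹(x+d) = (1/4)•(x+d)`) and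
`D = {(0,0)ᵀ, (1,1)ᵀ, (2,2)ᵀ, (3,3)ᵀ, (2,1)ᵀ, (1,2)ᵀ, (0,3)ᵀ, (3,0)ᵀ}`, the attractor
`F(T,D)` (the unique nonempty compact set with `F = ⋃_{d ∈ D} T⁻¹(F + d)`) is
connected. -/
theorem stmt15
    (D : Finset (Fin 2 → ℤ))
    (hD : D = {![0, 0], ![1, 1], ![2, 2], ![3, 3], ![2, 1], ![1, 2], ![0, 3], ![3, 0]})
    (F : Set (Fin 2 → ℝ)) (hne : F.Nonempty) (hcpt : IsCompact F)
    (hfix : F = ⋃ d ∈ D, (fun x => (4 : ℝ)⁻¹ • (x + castVec d)) '' F) :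
    IsConnected F := by
  subst hD
  exact ⟨hne, isPreconnected_of_reflTransGen_piecesMeet (K := 4⁻¹) (by norm_num)
    (fun d _ => lipschitzWith_digitMap d) hfix hcpt
    (reflTransGen_piecesMeet_digits hcpt.isClosed hne hfix)⟩
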